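/- arXiv:2107.09743 — 4 statements merged into one kernel-verified Lean document; each statement's English description precedes it below -/
import Mathlib

section
/- For all n ≥ 3, φ(n) ≥ 3·(φ(n-1))². -/
/-- `F n = (a n ·, b n ·, φ n)` from the recursive construction;
    `φ 1 := 1` by convention. -/
def F : ℕ → ((ℕ → ℚ) × (ℕ → ℚ) × ℚ)
  | 0 => (fun _ => 0, fun _ => 0, 1)
  | 1 => (fun j => if j = 1 then 1 else 0, fun j => if j = 1 then 1 else 0, 1)
  | (n+2) =>
      let p := F (n+1)
      let th : ℚ := 3 * p.1 (n+1)
      let ph : ℚ := if n = 0 then 4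
        else 4 * ∑ j ∈ Finset.Icc 1 (n+1), (th * p.2.1 j - 3 * p.1 j)
      (fun j => if j = n+2 then ph else 4 * p.1 j,
       fun j => if j = n+2 then 1 else (1 + th) * p.2.1 j,
       ph)

/-- coefficient `a(n,j)` -/
def a (n j : ℕ) : ℚ := (F n).1 j
/-- coefficient `b(n,j)` -/
def b (n j : ℕ) : ℚ := (F n).2.1 j
/-- `φ(n)` -/
def phi (n : ℕ) : ℚ := (F n).2.2
/-- `θ(n) = 3·a(n-1,n-1)` -/
def theta (n : ℕ) : ℚ := 3 * a (n-1) (n-1)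

/-!
For `n ≥ 2` put `T(n) = ∑ⱼ b(n,j)` and `A(n) = ∑ⱼ a(n,j)`. Since `a(n,n) = φ(n)` and `b(n,n) = 1`,
the definition collapses to the three-term recurrence
`φ(n+1) = 12 (φ(n) T(n) - A(n))`, `T(n+1) = (1 + 3φ(n)) T(n) + 1`, `A(n+1) = 4 A(n) + φ(n+1)`.
Substituting the last two into the first at `n + 1`, and using the first at `n` once more, gives
`φ(n+2) - 3 φ(n+1)² = 12 (φ(n+1) T(n) + (3 φ(n+1) - 4) A(n))` and
`φ(n+2) - 4 φ(n+1) = 12 T(n) (φ(n+1) (1 + 3 φ(n)) - 4 φ(n))`.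
The second identity keeps `T, A ≥ 0` and `φ ≥ 4` by induction, and then the first is nonnegative.
-/

open Finset

structure IsPhiRecurrence {K : Type*} [CommRing K] (p T A : ℕ → K) : Prop where
  p_succ : ∀ n, p (n + 1) = 12 * (p n * T n - A n)
  T_succ : ∀ n, T (n + 1) = (1 + 3 * p n) * T n + 1
  A_succ : ∀ n, A (n + 1) = 4 * A n + p (n + 1)

namespace IsPhiRecurrence

section CommRing

variable {K : Type*} [CommRing K] {p T A : ℕ → K}

theorem p_succ_succ (h : IsPhiRecurrence p T A) (n : ℕ) :
    p (n + 2) = 12 * (p (n + 1) * (1 + 3 * p n) * T n - 4 * A n) := by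
  rw [h.p_succ (n + 1), h.T_succ, h.A_succ]
  ring

theorem p_succ_succ_sub_four_mul (h : IsPhiRecurrence p T A) (n : ℕ) :
    p (n + 2) - 4 * p (n + 1) = 12 * T n * (p (n + 1) * (1 + 3 * p n) - 4 * p n) := by
  linear_combination h.p_succ_succ n - 4 * h.p_succ n

theorem p_succ_succ_sub_three_mul_sq (h : IsPhiRecurrence p T A) (n : ℕ) :
    p (n + 2) - 3 * p (n + 1) ^ 2 = 12 * (p (n + 1) * T n + (3 * p (n + 1) - 4) * A n) := by
  linear_combination h.p_succ_succ n - 3 * p (n + 1) * h.p_succ n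

end CommRing

section Ordered

variable {K : Type*} [CommRing K] [LinearOrder K] [IsStrictOrderedRing K] {p T A : ℕ → K}

theorem nonneg_and_four_le (h : IsPhiRecurrence p T A) (hT : 0 ≤ T 0) (hA : 0 ≤ A 0)
    (hp₀ : 4 ≤ p 0) (hp₁ : 4 ≤ p 1) (n : ℕ) :
    0 ≤ T n ∧ 0 ≤ A n ∧ 4 ≤ p n ∧ 4 ≤ p (n + 1) := by
  induction n with
  | zero => exact ⟨hT, hA, hp₀, hp₁⟩
  | succ n ih =>
    obtain ⟨hTn, hAn, hpn, hpn₁⟩ := ih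
    have hfactor : 0 ≤ p (n + 1) * (1 + 3 * p n) - 4 * p n := by nlinarith
    refine ⟨?_, ?_, hpn₁, ?_⟩
    · rw [h.T_succ]; nlinarith
    · rw [h.A_succ]; linarith
    · linarith [h.p_succ_succ_sub_four_mul n, mul_nonneg hTn hfactor]

theorem three_mul_sq_le (h : IsPhiRecurrence p T A) (hT : 0 ≤ T 0) (hA : 0 ≤ A 0)
    (hp₀ : 4 ≤ p 0) (hp₁ : 4 ≤ p 1) (n : ℕ) :
    3 * p (n + 1) ^ 2 ≤ p (n + 2) := by
  obtain ⟨hTn, hAn, -, hpn₁⟩ := h.nonneg_and_four_le hT hA hp₀ hp₁ n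
  linarith [h.p_succ_succ_sub_three_mul_sq n, mul_nonneg (by linarith : (0 : K) ≤ p (n + 1)) hTn,
    mul_nonneg (by linarith : (0 : K) ≤ 3 * p (n + 1) - 4) hAn]

end Ordered

end IsPhiRecurrence

def aSum (n : ℕ) : ℚ := ∑ j ∈ Icc 1 n, a n j

def bSum (n : ℕ) : ℚ := ∑ j ∈ Icc 1 n, b n j

theorem a_self (n : ℕ) : a (n + 2) (n + 2) = phi (n + 2) := by
  simp [a, phi, F]

theorem b_self (n : ℕ) : b (n + 2) (n + 2) = 1 := by
  simp [b, F]

theorem a_succ_of_ne {n j : ℕ} (h : j ≠ n + 2) : a (n + 2) j = 4 * a (n + 1) j := by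
  simp only [a, F, if_neg h]

theorem b_succ_of_ne {n j : ℕ} (h : j ≠ n + 3) :
    b (n + 3) j = (1 + 3 * phi (n + 2)) * b (n + 2) j := by
  have hdiag : (F (n + 2)).1 (n + 2) = phi (n + 2) := a_self n
  rw [b, b, F.eq_3 (n + 1)]
  simp only [if_neg h, hdiag]

theorem phi_two : phi 2 = 4 := by
  simp [phi, F]

theorem aSum_two : aSum 2 = 8 := by
  norm_num [aSum, a, F, sum_Icc_succ_top]

theorem bSum_two : bSum 2 = 5 := by
  norm_num [bSum, b, F, sum_Icc_succ_top]

theorem phi_succ (n : ℕ) : phi (n + 3) = 12 * (phi (n + 2) * bSum (n + 2) - aSum (n + 2)) := by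
  have hdef : phi (n + 3) =
      4 * ∑ j ∈ Icc 1 (n + 2), (3 * a (n + 2) (n + 2) * b (n + 2) j - 3 * a (n + 2) j) := by
    simp only [phi, F, a, b, if_neg (Nat.succ_ne_zero n)]
  rw [hdef, a_self, bSum, aSum, mul_sum, mul_sum, ← sum_sub_distrib, mul_sum]
  exact sum_congr rfl fun j _ => by ring

theorem bSum_succ (n : ℕ) : bSum (n + 3) = (1 + 3 * phi (n + 2)) * bSum (n + 2) + 1 := by
  rw [bSum, sum_Icc_succ_top (by omega), b_self (n + 1), bSum, mul_sum]
  congr 1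
  exact sum_congr rfl fun j hj => b_succ_of_ne (by simp at hj; omega)

theorem aSum_succ (n : ℕ) : aSum (n + 3) = 4 * aSum (n + 2) + phi (n + 3) := by
  rw [aSum, sum_Icc_succ_top (by omega), a_self (n + 1), aSum, mul_sum]
  congr 1
  exact sum_congr rfl fun j hj => a_succ_of_ne (by simp at hj; omega)

theorem isPhiRecurrence :
    IsPhiRecurrence (fun n ↦ phi (n + 2)) (fun n ↦ bSum (n + 2)) (fun n ↦ aSum (n + 2)) where
  p_succ := phi_succ
  T_succ := bSum_succ
  A_succ := aSum_succ

theorem phi_three : phi 3 = 144 := by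
  rw [phi_succ 0, phi_two, bSum_two, aSum_two]
  norm_num

theorem phi_growth (n : ℕ) (hn : 3 ≤ n) : 3 * (phi (n-1))^2 ≤ phi n := by
  obtain ⟨k, rfl⟩ : ∃ k, n = k + 3 := ⟨n - 3, by omega⟩
  rw [show k + 3 - 1 = k + 2 from rfl]
  cases k with
  | zero => rw [phi_two, phi_three]; norm_num
  | succ k =>
    exact isPhiRecurrence.three_mul_sq_le (by rw [bSum_two]; norm_num)
      (by rw [aSum_two]; norm_num) (by rw [phi_two]) (by rw [phi_three]; norm_num) k
end

section
/- For all n ≥ 4, φ(n) < 17·(φ(n-1))². -/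
/-!
Write `S n = ∑ⱼ b(n,j)` and `T n = ∑ⱼ a(n,j)`. Unfolding the recursion gives, for `n ≥ 2`,
`φ(n+1) = 12 (φ(n) S(n) − T(n))`, `S(n+1) = (1 + 3φ(n)) S(n) + 1` and `T(n+1) = 4 T(n) + φ(n+1)`.
Along this recursion the inequalities `4 ≤ φ`, `5 ≤ S`, `0 < T ≤ 2φ` and `12 S ≤ 17 φ` propagate
from `n = 2`, and then `φ(n+1) < 12 φ(n) S(n) ≤ 17 φ(n)²`.
-/

section

variable {α : Type*} [Field α] [LinearOrder α] [IsStrictOrderedRing α]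

structure GrowthInvariant (p s t : α) : Prop where
  four_le_p : 4 ≤ p
  five_le_s : 5 ≤ s
  t_pos : 0 < t
  t_le : t ≤ 2 * p
  s_le : 12 * s ≤ 17 * p

namespace GrowthInvariant

variable {p s t : α}

theorem step (h : GrowthInvariant p s t) :
    GrowthInvariant (12 * (p * s - t)) ((1 + 3 * p) * s + 1) (4 * t + 12 * (p * s - t)) := by
  obtain ⟨hp, hs, ht, htp, hsp⟩ := h
  constructor <;> nlinarith

theorem next_lt (h : GrowthInvariant p s t) : 12 * (p * s - t) < 17 * p ^ 2 := by
  obtain ⟨hp, -, ht, -, hsp⟩ := h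
  nlinarith

end GrowthInvariant

end

def sumA (n : ℕ) : ℚ := ∑ j ∈ Finset.Icc 1 n, a n j

def sumB (n : ℕ) : ℚ := ∑ j ∈ Finset.Icc 1 n, b n j

theorem a_add_two (n j : ℕ) :
    a (n + 2) j = if j = n + 2 then phi (n + 2) else 4 * a (n + 1) j := by
  simp only [a, phi, F]

theorem b_add_two (n j : ℕ) :
    b (n + 2) j = if j = n + 2 then 1 else (1 + 3 * a (n + 1) (n + 1)) * b (n + 1) j := by
  simp only [a, b, F]

theorem a_diag (n : ℕ) : a (n + 1) (n + 1) = phi (n + 1) := by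
  cases n with
  | zero => rfl
  | succ m => rw [a_add_two, if_pos rfl]

theorem phi_add_three (n : ℕ) :
    phi (n + 3) = 12 * (phi (n + 2) * sumB (n + 2) - sumA (n + 2)) := by
  have hφ : phi (n + 3) =
      4 * ∑ j ∈ Finset.Icc 1 (n + 2), (3 * a (n + 2) (n + 2) * b (n + 2) j - 3 * a (n + 2) j) := by
    simp only [phi, a, b, F, if_neg (Nat.succ_ne_zero n)]
  rw [hφ, a_diag, sumA, sumB, Finset.sum_sub_distrib, ← Finset.mul_sum, ← Finset.mul_sum]
  ring

theorem sumA_add_two (n : ℕ) : sumA (n + 2) = 4 * sumA (n + 1) + phi (n + 2) := by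
  have hprev : ∀ j ∈ Finset.Icc 1 (n + 1), a (n + 2) j = 4 * a (n + 1) j := fun j hj => by
    rw [a_add_two, if_neg (by grind)]
  rw [sumA, Finset.sum_Icc_succ_top (by omega), a_add_two, if_pos rfl,
    Finset.sum_congr rfl hprev, ← Finset.mul_sum, sumA]

theorem sumB_add_two (n : ℕ) : sumB (n + 2) = (1 + 3 * phi (n + 1)) * sumB (n + 1) + 1 := by
  have hprev : ∀ j ∈ Finset.Icc 1 (n + 1), b (n + 2) j = (1 + 3 * phi (n + 1)) * b (n + 1) j :=
    fun j hj => by rw [b_add_two, if_neg (by grind), a_diag]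
  rw [sumB, Finset.sum_Icc_succ_top (by omega), b_add_two, if_pos rfl,
    Finset.sum_congr rfl hprev, ← Finset.mul_sum, sumB]

theorem growthInvariant_two : GrowthInvariant (phi 2) (sumB 2) (sumA 2) := by
  have hphi : phi 2 = 4 := rfl
  have hB : sumB 2 = 5 := by norm_num [sumB, Finset.sum_Icc_succ_top, b, F]
  have hA : sumA 2 = 8 := by norm_num [sumA, Finset.sum_Icc_succ_top, a, F]
  rw [hphi, hB, hA]
  constructor <;> norm_num

theorem growthInvariant (n : ℕ) (hn : 2 ≤ n) : GrowthInvariant (phi n) (sumB n) (sumA n) := by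
  induction n, hn using Nat.le_induction with
  | base => exact growthInvariant_two
  | succ n hn ih =>
    obtain ⟨m, rfl⟩ := Nat.exists_eq_add_of_le' hn
    show GrowthInvariant (phi (m + 3)) (sumB (m + 3)) (sumA (m + 3))
    rw [sumB_add_two (m + 1), sumA_add_two (m + 1), phi_add_three m]
    exact ih.step

theorem phi_upper_growth (n : ℕ) (hn : 4 ≤ n) : phi n < 17 * (phi (n-1))^2 := by
  obtain ⟨m, rfl⟩ : ∃ m, n = m + 3 := ⟨n - 3, by omega⟩
  rw [phi_add_three]
  exact (growthInvariant (m + 2) le_add_self).next_lt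
end

section
/- For all n ≥ 3, the values a(n-1, j) are non-decreasing in j for 1 ≤ j ≤ n-1; i.e., a(n-1, j-1) ≤ a(n-1, j) for 2 ≤ j ≤ n-1. -/
/-!
By induction on `n ≥ 2`, the row `a n` is nonnegative and monotone on `[1, n]`, every `b n j`
is at least `1`, and `b n 1 ≥ 2`. The only nontrivial point is that the new diagonal entry
`φ(n+1)` dominates `4 a(n,n)`: every summand `3 a(n,n) b(n,j) - 3 a(n,j)` of `φ(n+1) / 4` is
nonnegative, and the one at `j = 1` is at least `3 a(n,n)` because `b(n,1) ≥ 2`.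
-/

lemma a_add_three (n j : ℕ) :
    a (n + 3) j = if j = n + 3 then phi (n + 3) else 4 * a (n + 2) j := by
  simp [a, phi, F]

lemma b_add_three (n j : ℕ) :
    b (n + 3) j = if j = n + 3 then 1 else (1 + 3 * a (n + 2) (n + 2)) * b (n + 2) j := by
  simp [a, b, F]

lemma phi_add_three_s4 (n : ℕ) :
    phi (n + 3) = 4 * ∑ j ∈ Finset.Icc 1 (n + 2),
      (3 * a (n + 2) (n + 2) * b (n + 2) j - 3 * a (n + 2) j) := by
  simp [phi, a, b, F]

structure CoeffBounds (n : ℕ) : Prop where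
  a_one_nonneg : 0 ≤ a n 1
  monotoneOn_a : MonotoneOn (a n) (Set.Icc 1 n)
  one_le_b : ∀ j ∈ Set.Icc 1 n, 1 ≤ b n j
  two_le_b_one : 2 ≤ b n 1

lemma coeffBounds_two : CoeffBounds 2 where
  a_one_nonneg := by norm_num [a, F]
  monotoneOn_a := by
    have h : ∀ j ∈ Set.Icc 1 2, a 2 j = 4 := by
      rintro j ⟨h1, h2⟩
      interval_cases j <;> norm_num [a, F]
    intro i hi j hj _
    rw [h i hi, h j hj]
  one_le_b := by
    rintro j ⟨h1, h2⟩
    interval_cases j <;> norm_num [b, F]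
  two_le_b_one := by norm_num [b, F]

namespace CoeffBounds

variable {n : ℕ}

lemma a_le_a_self (h : CoeffBounds n) {j : ℕ} (hj : j ∈ Set.Icc 1 n) : a n j ≤ a n n :=
  h.monotoneOn_a hj ⟨hj.1.trans hj.2, le_rfl⟩ hj.2

lemma a_self_nonneg (h : CoeffBounds n) (hn : 1 ≤ n) : 0 ≤ a n n :=
  h.a_one_nonneg.trans (h.a_le_a_self ⟨le_rfl, hn⟩)

lemma four_mul_a_self_le_phi (h : CoeffBounds (n + 2)) :
    4 * a (n + 2) (n + 2) ≤ phi (n + 3) := by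
  set A := a (n + 2) (n + 2)
  have hA : 0 ≤ A := h.a_self_nonneg (by omega)
  have hterm : ∀ j ∈ Finset.Icc 1 (n + 2), 0 ≤ 3 * A * b (n + 2) j - 3 * a (n + 2) j := by
    intro j hj
    have hj' : j ∈ Set.Icc 1 (n + 2) := by simpa using hj
    nlinarith [h.a_le_a_self hj', h.one_le_b j hj']
  have hfirst : A ≤ 3 * A * b (n + 2) 1 - 3 * a (n + 2) 1 := by
    nlinarith [h.a_le_a_self ⟨le_rfl, by omega⟩, h.two_le_b_one]
  have hsum := Finset.single_le_sum hterm (Finset.mem_Icc.mpr ⟨le_rfl, by omega⟩)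
  rw [phi_add_three_s4]
  linarith

lemma succ (h : CoeffBounds (n + 2)) : CoeffBounds (n + 3) := by
  have hA := h.a_self_nonneg (by omega)
  refine ⟨?_, ?_, ?_, ?_⟩
  · rw [a_add_three, if_neg (by omega)]
    linarith [h.a_one_nonneg]
  · refine monotoneOn_of_le_succ Set.ordConnected_Icc fun j _ ⟨hj1, _⟩ hj' => ?_
    rw [Order.succ_eq_add_one] at hj' ⊢
    obtain ⟨-, hj2⟩ := hj'
    rw [a_add_three, a_add_three, if_neg (by omega)]
    split_ifs with hlast
    · obtain rfl : j = n + 2 := by omega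
      exact h.four_mul_a_self_le_phi
    · have := h.monotoneOn_a (a := j) (b := j + 1) ⟨hj1, by omega⟩ ⟨by omega, by omega⟩ (by omega)
      linarith
  · rintro j ⟨hj1, hj2⟩
    rw [b_add_three]
    split_ifs with hlast
    · exact le_rfl
    · exact one_le_mul_of_one_le_of_one_le (by linarith) (h.one_le_b j ⟨hj1, by omega⟩)
  · rw [b_add_three, if_neg (by omega)]
    nlinarith [h.two_le_b_one]

end CoeffBounds

lemma coeffBounds {n : ℕ} (hn : 2 ≤ n) : CoeffBounds n := by
  induction n, hn using Nat.le_induction with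
  | base => exact coeffBounds_two
  | succ n hn ih =>
    obtain ⟨k, rfl⟩ : ∃ k, n = k + 2 := ⟨n - 2, by omega⟩
    exact ih.succ

theorem a_monotone_general (n : ℕ) :
    ∀ j : ℕ, 2 ≤ j → j ≤ n - 1 → a (n-1) (j-1) ≤ a (n-1) j := by
  intro j hj2 hjn
  exact (coeffBounds (by omega)).monotoneOn_a ⟨by omega, by omega⟩ ⟨by omega, hjn⟩ (by omega)

theorem a_monotone (n : ℕ) (hn : 3 ≤ n) :
    ∀ j : ℕ, 2 ≤ j → j ≤ n - 1 → a (n-1) (j-1) ≤ a (n-1) j :=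
  a_monotone_general n
end

section
/- The map S ↦ (λ(n,S), μ(n,S)) from subsets of {1,…,n} to points of (0,1)×(0,1) is injective, where the points are defined recursively by: λ(1,∅) = μ(1,∅) = 1/4, λ(1,{1}) = μ(1,{1}) = 3/4; and for n ≥ 2 and S ⊆ {1,…,n-1}: (λ(n,S), μ(n,S)) = (λ(n-1,S)/4, (μ(n-1,S)+θ(n))/(1+θ(n))) and (λ(n,S∪{n}), μ(n,S∪{n})) = ((λ(n-1,S)+3)/4, μ(n-1,S)/(1+θ(n))), where θ(n) > 0 for all n ≥ 2. -/
/-- The parameter point `(λ(n,S), μ(n,S))` of the recursive construction,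
    for a given sequence `θ`. -/
noncomputable def pt (th : ℕ → ℝ) : ℕ → Finset ℕ → ℝ × ℝ
  | 0, _ => (0, 0)
  | 1, S => if 1 ∈ S then (3/4, 3/4) else (1/4, 1/4)
  | (n+2), S =>
      let p := pt th (n+1) (S.erase (n+2))
      if n+2 ∈ S then ((p.1 + 3)/4, p.2/(1 + th (n+2)))
      else (p.1/4, (p.2 + th (n+2))/(1 + th (n+2)))

lemma pt_mem (th : ℕ → ℝ) (n : ℕ) (S : Finset ℕ) (h : n+2 ∈ S) :
    pt th (n+2) S = (((pt th (n+1) (S.erase (n+2))).1 + 3)/4,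
      (pt th (n+1) (S.erase (n+2))).2/(1 + th (n+2))) := by
  simp [pt, h]

lemma pt_notMem (th : ℕ → ℝ) (n : ℕ) (S : Finset ℕ) (h : n+2 ∉ S) :
    pt th (n+2) S = ((pt th (n+1) (S.erase (n+2))).1/4,
      ((pt th (n+1) (S.erase (n+2))).2 + th (n+2))/(1 + th (n+2))) := by
  simp [pt, h]

theorem pt_injective (th : ℕ → ℝ) (hth : ∀ n, 2 ≤ n → 0 < th n)
    (n : ℕ) (hn : 1 ≤ n) :
    (∀ S ⊆ Finset.Icc 1 n, pt th n S ∈ Set.Ioo (0:ℝ) 1 ×ˢ Set.Ioo (0:ℝ) 1) ∧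
    Set.InjOn (pt th n) {S : Finset ℕ | S ⊆ Finset.Icc 1 n} := by
  induction n with
  | zero => omega
  | succ m ih =>
    match m, ih with
    | 0, _ =>
      constructor
      · intro S hS
        by_cases h : 1 ∈ S <;>
          simp [pt, h, Set.mem_prod, Set.mem_Ioo] <;> norm_num
      · intro S hS T hT heq
        simp only [Set.mem_setOf_eq, Finset.Icc_self] at hS hT
        rcases Finset.subset_singleton_iff.mp hS with rfl | rfl <;>
          rcases Finset.subset_singleton_iff.mp hT with rfl | rfl <;>
          simp [pt] at heq <;> try rfl
        all_goals norm_num at heq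
    | (k+1), ih =>
      obtain ⟨ihmem, ihinj⟩ := ih (by omega)
      have hθ : 0 < th (k+2) := hth _ (by omega)
      have hθ1 : 0 < 1 + th (k+2) := by linarith
      have hsub : ∀ S : Finset ℕ, S ⊆ Finset.Icc 1 (k+2) →
          S.erase (k+2) ⊆ Finset.Icc 1 (k+1) := by
        intro S hS x hx
        have h1 := Finset.mem_erase.mp hx
        have h2 := Finset.mem_Icc.mp (hS h1.2)
        exact Finset.mem_Icc.mpr (by omega)
      constructor
      · intro S hS
        have hm := ihmem _ (hsub S hS)
        simp only [Set.mem_prod, Set.mem_Ioo] at hm ⊢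
        obtain ⟨⟨hp1, hp2⟩, hq1, hq2⟩ := hm
        by_cases h : k+2 ∈ S
        · rw [pt_mem th k S h]
          refine ⟨⟨by linarith, by linarith⟩, div_pos hq1 hθ1, ?_⟩
          rw [div_lt_one hθ1]; linarith
        · rw [pt_notMem th k S h]
          refine ⟨⟨by linarith, by linarith⟩, div_pos (by linarith) hθ1, ?_⟩
          rw [div_lt_one hθ1]; linarith
      · intro S hS T hT heq
        simp only [Set.mem_setOf_eq] at hS hT
        have hmS := ihmem _ (hsub S hS)
        have hmT := ihmem _ (hsub T hT)
        simp only [Set.mem_prod, Set.mem_Ioo] at hmS hmT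
        obtain ⟨⟨hp1, hp2⟩, hp3, hp4⟩ := hmS
        obtain ⟨⟨hq1, hq2⟩, hq3, hq4⟩ := hmT
        have her : S.erase (k+2) = T.erase (k+2) → S = T := by
          intro h
          by_cases hS' : k+2 ∈ S <;> by_cases hT' : k+2 ∈ T
          · rw [← Finset.insert_erase hS', ← Finset.insert_erase hT', h]
          · exfalso
            rw [pt_mem th k S hS', pt_notMem th k T hT'] at heq
            have h1 : ((pt th (k+1) (S.erase (k+2))).1 + 3)/4 =
                (pt th (k+1) (T.erase (k+2))).1/4 := congrArg Prod.fst heq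
            linarith
          · exfalso
            rw [pt_notMem th k S hS', pt_mem th k T hT'] at heq
            have h1 : (pt th (k+1) (S.erase (k+2))).1/4 =
                ((pt th (k+1) (T.erase (k+2))).1 + 3)/4 := congrArg Prod.fst heq
            linarith
          · rw [← Finset.erase_eq_of_notMem hS', ← Finset.erase_eq_of_notMem hT', h]
        apply her
        apply ihinj (hsub S hS) (hsub T hT)
        by_cases hS' : k+2 ∈ S <;> by_cases hT' : k+2 ∈ T
        · rw [pt_mem th k S hS', pt_mem th k T hT'] at heq
          have h1 := congrArg Prod.fst heq
          have h2 := congrArg Prod.snd heq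
          simp only at h1 h2
          have e1 : (pt th (k+1) (S.erase (k+2))).1 = (pt th (k+1) (T.erase (k+2))).1 := by
            field_simp at h1; linarith
          have e2 : (pt th (k+1) (S.erase (k+2))).2 = (pt th (k+1) (T.erase (k+2))).2 :=
            mul_right_cancel₀ hθ1.ne' ((div_eq_div_iff hθ1.ne' hθ1.ne').mp h2)
          exact Prod.ext e1 e2
        · exfalso
          rw [pt_mem th k S hS', pt_notMem th k T hT'] at heq
          have h1 := congrArg Prod.fst heq
          simp only at h1
          linarith
        · exfalso
          rw [pt_notMem th k S hS', pt_mem th k T hT'] at heq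
          have h1 := congrArg Prod.fst heq
          simp only at h1
          linarith
        · rw [pt_notMem th k S hS', pt_notMem th k T hT'] at heq
          have h1 := congrArg Prod.fst heq
          have h2 := congrArg Prod.snd heq
          simp only at h1 h2
          have e1 : (pt th (k+1) (S.erase (k+2))).1 = (pt th (k+1) (T.erase (k+2))).1 := by
            linarith
          have e2 : (pt th (k+1) (S.erase (k+2))).2 = (pt th (k+1) (T.erase (k+2))).2 := by
            have := mul_right_cancel₀ hθ1.ne' ((div_eq_div_iff hθ1.ne' hθ1.ne').mp h2)
            linarith
          exact Prod.ext e1 e2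
end
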